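/- Let C_P, C_U, C_V be diagonal positive definite coefficient matrices and A_P, A_U, A_V diagonal positive definite norm matrices. If Q_y := A_P D_y^V + (A_V D_y^P)ᵀ = 0 and Q_x := A_P D_x^U + (A_U D_x^P)ᵀ = 0, then along any solution of C_P A_P P' = −A_P D_x^U U − A_P D_y^V V, C_U A_U U' = −A_U D_x^P P, C_V A_V V' = −A_V D_y^P P, the weighted energy E = (1/2)(Pᵀ C_P A_P P + Uᵀ C_U A_U U + Vᵀ C_V A_V V) is constant; i.e., the heterogeneous-media discretization inherits energy conservation from the constant-coefficient case. -/

import Mathlib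

/-!
Since `C A` is diagonal, hence symmetric, `d/dt (xᵀ C A x) = 2 xᵀ C A x'`. Substituting the
equations of motion gives `dE/dt = -(Pᵀ Q_x U + Pᵀ Q_y V)`, which vanishes because the
summation-by-parts matrices `Q_x`, `Q_y` are zero.
-/

open Matrix

theorem Matrix.IsDiag.mul {n α : Type*} [Fintype n] [NonUnitalNonAssocSemiring α]
    {A B : Matrix n n α} (hA : A.IsDiag) (hB : B.IsDiag) : (A * B).IsDiag := by
  classical
  rw [← hA.diagonal_diag, ← hB.diagonal_diag, diagonal_mul_diagonal]
  exact isDiag_diagonal _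

theorem Matrix.dotProduct_mulVec_add_dotProduct_mulVec_eq_zero {m n α : Type*} [Fintype m]
    [Fintype n] [CommRing α] {A : Matrix m n α} {B : Matrix n m α} (h : A + Bᵀ = 0)
    (p : m → α) (u : n → α) : p ⬝ᵥ A *ᵥ u + u ⬝ᵥ B *ᵥ p = 0 := by
  have hflip : u ⬝ᵥ B *ᵥ p = p ⬝ᵥ Bᵀ *ᵥ u := by
    rw [mulVec_transpose, dotProduct_mulVec, dotProduct_comm]
  rw [hflip, ← dotProduct_add, ← add_mulVec, h, zero_mulVec, dotProduct_zero]

section Calculus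

variable {ι κ : Type*} [Fintype ι] [Fintype κ] {x y : ℝ → ι → ℝ} {x' y' : ι → ℝ}
  {t : ℝ}

theorem HasDerivAt.dotProduct (hx : HasDerivAt x x' t) (hy : HasDerivAt y y' t) :
    HasDerivAt (fun s => x s ⬝ᵥ y s) (x' ⬝ᵥ y t + x t ⬝ᵥ y') t := by
  unfold _root_.dotProduct
  rw [← Finset.sum_add_distrib]
  exact HasDerivAt.fun_sum fun i _ => (hasDerivAt_pi.1 hx i).mul (hasDerivAt_pi.1 hy i)

theorem HasDerivAt.mulVec (M : Matrix κ ι ℝ) (hx : HasDerivAt x x' t) :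
    HasDerivAt (fun s => M *ᵥ x s) (M *ᵥ x') t :=
  (M.mulVecLin.toContinuousLinearMap.hasFDerivAt (x := x t)).comp_hasDerivAt t hx

theorem HasDerivAt.dotProduct_mulVec_self {M : Matrix ι ι ℝ} (hM : M.IsSymm)
    (hx : HasDerivAt x x' t) :
    HasDerivAt (fun s => x s ⬝ᵥ M *ᵥ x s) (2 * (x t ⬝ᵥ M *ᵥ x')) t := by
  convert hx.dotProduct (hx.mulVec M) using 1
  rw [dotProduct_comm, ← vecMul_transpose, hM.eq, ← dotProduct_mulVec]
  ring

end Calculus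

/-- Energy conservation for the heterogeneous-media semi-discretization. -/
theorem stmt19 {NP NU NV : ℕ}
    (CP AP : Matrix (Fin NP) (Fin NP) ℝ) (CU AU : Matrix (Fin NU) (Fin NU) ℝ)
    (CV AV : Matrix (Fin NV) (Fin NV) ℝ)
    (hCP : CP.IsDiag ∧ CP.PosDef) (hAP : AP.IsDiag ∧ AP.PosDef)
    (hCU : CU.IsDiag ∧ CU.PosDef) (hAU : AU.IsDiag ∧ AU.PosDef)
    (hCV : CV.IsDiag ∧ CV.PosDef) (hAV : AV.IsDiag ∧ AV.PosDef)
    (DxU : Matrix (Fin NP) (Fin NU) ℝ) (DyV : Matrix (Fin NP) (Fin NV) ℝ)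
    (DxP : Matrix (Fin NU) (Fin NP) ℝ) (DyP : Matrix (Fin NV) (Fin NP) ℝ)
    (hQy : AP * DyV + (AV * DyP)ᵀ = 0)
    (hQx : AP * DxU + (AU * DxP)ᵀ = 0)
    (P : ℝ → Fin NP → ℝ) (U : ℝ → Fin NU → ℝ) (V : ℝ → Fin NV → ℝ)
    (P' : ℝ → Fin NP → ℝ) (U' : ℝ → Fin NU → ℝ) (V' : ℝ → Fin NV → ℝ)
    (hP : ∀ t, HasDerivAt P (P' t) t) (hU : ∀ t, HasDerivAt U (U' t) t)
    (hV : ∀ t, HasDerivAt V (V' t) t)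
    (hPode : ∀ t, (CP * AP).mulVec (P' t) =
      -((AP * DxU).mulVec (U t)) - (AP * DyV).mulVec (V t))
    (hUode : ∀ t, (CU * AU).mulVec (U' t) = -((AU * DxP).mulVec (P t)))
    (hVode : ∀ t, (CV * AV).mulVec (V' t) = -((AV * DyP).mulVec (P t)))
    (E : ℝ → ℝ)
    (hE : ∀ t, E t = (1/2) * (P t ⬝ᵥ (CP * AP).mulVec (P t)
      + U t ⬝ᵥ (CU * AU).mulVec (U t) + V t ⬝ᵥ (CV * AV).mulVec (V t))) :
    ∀ t s, E t = E s := by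
  have hE' (t : ℝ) : HasDerivAt E 0 t := by
    have hrate : P t ⬝ᵥ (CP * AP) *ᵥ P' t + U t ⬝ᵥ (CU * AU) *ᵥ U' t
        + V t ⬝ᵥ (CV * AV) *ᵥ V' t = 0 := by
      rw [hPode, hUode, hVode, dotProduct_sub]
      simp only [dotProduct_neg]
      linarith [dotProduct_mulVec_add_dotProduct_mulVec_eq_zero hQx (P t) (U t),
        dotProduct_mulVec_add_dotProduct_mulVec_eq_zero hQy (P t) (V t)]
    rw [funext hE]
    refine ((((hP t).dotProduct_mulVec_self (hCP.1.mul hAP.1).isSymm).add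
      ((hU t).dotProduct_mulVec_self (hCU.1.mul hAU.1).isSymm)).add
      ((hV t).dotProduct_mulVec_self (hCV.1.mul hAV.1).isSymm)).const_mul (1 / 2) |>.congr_deriv ?_
    linear_combination hrate
  exact fun t s =>
    is_const_of_deriv_eq_zero (fun x => (hE' x).differentiableAt) (fun x => (hE' x).deriv) t s
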